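/- arXiv:1111.1471 — 2 statements merged into one kernel-verified Lean document; each statement's English description precedes it below -/
import Mathlib

section
/- The Poisson generating function M(z) = e^{-z} L(z), where L(z) = ∑_{n≥0} l_n z^n/n! is entire, satisfies M'(z) + M(z) = 1 − z·e^{-z/2} − e^{-z} + (z²/4)·e^{-z} + 2·M(z/2) for all z ∈ ℂ. -/
/-!
Multiplying the recurrence by `z ^ n / n!` and summing turns it into a differential equation for
`L`: since `2 ^ (1 - n) z ^ n = 2 (z / 2) ^ n`, the sum `∑ₖ C(n, k) lₖ` contributes the binomial
convolution `2 e^{z/2} L(z/2)`, the term `n 2 ^ (1 - n)` contributes `z e^{z/2}`, and the initial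
values only add the polynomial correction `-1 + z² / 4`, so
`L'(z) = e^z - z e^{z/2} + 2 e^{z/2} L(z/2) - 1 + z² / 4`.
The product rule for `e^{-z} L(z)` then gives the Poisson equation.
Termwise differentiation is legitimate because `L` is entire: convergence of `∑ aₙ (2r)ⁿ` bounds
its terms, so `∑ n ‖aₙ‖ rⁿ` is dominated by `∑ n 2⁻ⁿ`.
-/

open Finset
open scoped Nat

section PowerSeries

variable {𝕜 : Type*} [RCLike 𝕜] {a : ℕ → 𝕜}

theorem summable_pow_mul_norm_mul_pow_of_forall_summable
    (ha : ∀ z : 𝕜, Summable fun n => a n * z ^ n) (k : ℕ) {r : ℝ} (hr : 0 ≤ r) :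
    Summable fun n : ℕ => (n : ℝ) ^ k * (‖a n‖ * r ^ n) := by
  obtain ⟨C, hC⟩ := (ha ((2 * r : ℝ) : 𝕜)).tendsto_atTop_zero.norm.bddAbove_range
  refine .of_nonneg_of_le (fun n => by positivity) (fun n => ?_)
    ((summable_pow_mul_geometric_of_norm_lt_one k (r := (1 / 2 : ℝ)) (by norm_num)).mul_left C)
  calc (n : ℝ) ^ k * (‖a n‖ * r ^ n)
      = ‖a n * ((2 * r : ℝ) : 𝕜) ^ n‖ * ((n : ℝ) ^ k * (1 / 2) ^ n) := by
        rw [norm_mul, norm_pow, RCLike.norm_ofReal, abs_of_nonneg (by positivity), mul_pow,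
          one_div, inv_pow]
        field_simp
    _ ≤ C * ((n : ℝ) ^ k * (1 / 2) ^ n) := by gcongr; exact hC ⟨n, rfl⟩

theorem hasDerivAt_tsum_mul_pow (ha : ∀ z : 𝕜, Summable fun n => a n * z ^ n) (z : 𝕜) :
    HasDerivAt (fun w => ∑' n, a n * w ^ n) (∑' n, (n + 1) * a (n + 1) * z ^ n) z := by
  set R := ‖z‖ + 1
  have hR : 1 ≤ R := by simp [R]
  have hz : z ∈ Metric.ball (0 : 𝕜) R := by simp [R]
  have hu := summable_pow_mul_norm_mul_pow_of_forall_summable ha 1 (zero_le_one.trans hR)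
  have hbound : ∀ n, ∀ w ∈ Metric.ball (0 : 𝕜) R,
      ‖a n * (n * w ^ (n - 1))‖ ≤ (n : ℝ) ^ 1 * (‖a n‖ * R ^ n) := by
    intro n w hw
    rw [mem_ball_zero_iff] at hw
    rw [norm_mul, norm_mul, norm_pow, RCLike.norm_natCast, pow_one]
    have : ‖w‖ ^ (n - 1) ≤ R ^ n :=
      (pow_le_pow_left₀ (norm_nonneg w) hw.le _).trans (pow_le_pow_right₀ hR (Nat.sub_le n 1))
    calc ‖a n‖ * (n * ‖w‖ ^ (n - 1)) ≤ ‖a n‖ * (n * R ^ n) := by gcongr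
      _ = n * (‖a n‖ * R ^ n) := by ring
  have hderiv := hasDerivAt_tsum_of_isPreconnected hu Metric.isOpen_ball
    (convex_ball (0 : 𝕜) R).isPreconnected (fun n w _ => (hasDerivAt_pow n w).const_mul (a n))
    hbound (Metric.mem_ball_self (by positivity)) (ha 0) hz
  rw [(Summable.of_norm_bounded hu fun n => hbound n z hz).tsum_eq_zero_add] at hderiv
  refine hderiv.congr_deriv ?_
  simp only [Nat.cast_zero, zero_mul, mul_zero, zero_add, Nat.add_sub_cancel, Nat.cast_succ]
  exact tsum_congr fun n => by ring

variable {c : ℕ → 𝕜} {F : 𝕜 → 𝕜}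

theorem summable_div_factorial_mul_pow_of_hasSum_egf
    (hF : ∀ z, HasSum (fun n => c n * z ^ n / n !) (F z)) (w : 𝕜) :
    Summable fun n => c n / n ! * w ^ n := by
  simpa only [div_mul_eq_mul_div] using (hF w).summable

theorem summable_norm_of_hasSum_egf (hF : ∀ z, HasSum (fun n => c n * z ^ n / n !) (F z))
    (z : 𝕜) : Summable fun n => ‖c n * z ^ n / (n ! : 𝕜)‖ := by
  refine (summable_pow_mul_norm_mul_pow_of_forall_summable
    (summable_div_factorial_mul_pow_of_hasSum_egf hF) 0 (norm_nonneg z)).congr fun n => ?_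
  simp only [pow_zero, one_mul, norm_div, norm_mul, norm_pow]
  ring

theorem hasDerivAt_of_hasSum_egf (hF : ∀ z, HasSum (fun n => c n * z ^ n / n !) (F z)) (z : 𝕜) :
    HasDerivAt F (∑' n, c (n + 1) * z ^ n / n !) z := by
  have hF' : F = fun w => ∑' n, c n / n ! * w ^ n := funext fun w => by
    simpa only [div_mul_eq_mul_div] using (hF w).tsum_eq.symm
  rw [hF']
  refine (hasDerivAt_tsum_mul_pow (summable_div_factorial_mul_pow_of_hasSum_egf hF) z).congr_deriv
    (tsum_congr fun n => ?_)
  rw [Nat.factorial_succ]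
  push_cast
  field_simp

end PowerSeries

theorem Complex.hasSum_pow_div_factorial (w : ℂ) :
    HasSum (fun n => w ^ n / n !) (Complex.exp w) := by
  simpa only [← Complex.exp_eq_exp_ℂ] using NormedSpace.expSeries_div_hasSum_exp w

theorem Complex.hasSum_nat_mul_pow_div_factorial (w : ℂ) :
    HasSum (fun n : ℕ => n * w ^ n / n !) (w * Complex.exp w) := by
  have h : HasSum (fun n : ℕ => ((n + 1 : ℕ) : ℂ) * w ^ (n + 1) / (n + 1)!) (w * Complex.exp w) :=
    ((hasSum_pow_div_factorial w).mul_left w).congr_fun fun n => by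
      rw [Nat.factorial_succ]
      push_cast
      field_simp
      ring
  simpa using HasSum.zero_add (f := fun n : ℕ => (n : ℂ) * w ^ n / n !) h

theorem hasSum_egf_choose_mul_cexp {c : ℕ → ℂ} {F : ℂ → ℂ}
    (hF : ∀ z, HasSum (fun n => c n * z ^ n / n !) (F z)) (w : ℂ) :
    HasSum (fun n => (∑ k ∈ range (n + 1), n.choose k * c k) * w ^ n / n !)
      (F w * Complex.exp w) := by
  have h := hasSum_sum_range_mul_of_summable_norm (summable_norm_of_hasSum_egf hF w)
    (NormedSpace.norm_expSeries_div_summable w)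
  rw [(hF w).tsum_eq, (Complex.hasSum_pow_div_factorial w).tsum_eq] at h
  refine h.congr_fun fun n => ?_
  rw [sum_mul, sum_div]
  refine sum_congr rfl fun k hk => ?_
  have hkn : k ≤ n := Nat.lt_succ_iff.mp (mem_range.mp hk)
  have hpow : w ^ n = w ^ k * w ^ (n - k) := by rw [← pow_add, Nat.add_sub_cancel' hkn]
  have hn : (n ! : ℂ) ≠ 0 := by exact_mod_cast n.factorial_ne_zero
  rw [Nat.cast_choose ℂ hkn, hpow]
  field_simp

theorem egf_term_succ_eq (l : ℕ → ℝ)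
    (h0 : l 0 = 0) (h1 : l 1 = 0) (h2 : l 2 = 0) (h3 : l 3 = 1 / 2)
    (hrec : ∀ n : ℕ, 3 ≤ n →
      l (n + 1) = 1 + (2 : ℝ) ^ (1 - (n : ℤ)) * ∑ k ∈ range (n + 1), (n.choose k : ℝ) * l k
        - (n : ℝ) * (2 : ℝ) ^ (1 - (n : ℤ)))
    (z : ℂ) (n : ℕ) :
    (l (n + 1) : ℂ) * z ^ n / n ! =
      (z ^ n / n !) - 2 * (n * (z / 2) ^ n / n !)
        + 2 * ((∑ k ∈ range (n + 1), n.choose k * (l k : ℂ)) * (z / 2) ^ n / n !)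
        - (if n = 0 then 1 else 0) + (if n = 2 then z ^ 2 / 4 else 0) := by
  match n with
  | 0 => simp [h0, h1]
  | 1 =>
    simp [h0, h1, h2, sum_range_succ]
    ring
  | 2 =>
    simp [h0, h1, h2, h3, sum_range_succ]
    ring
  | m + 3 =>
    have hrec' := congrArg (fun x : ℝ => (x : ℂ)) (hrec (m + 3) (by omega))
    have h2pow : (2 : ℂ) ^ (1 - ((m + 3 : ℕ) : ℤ)) * z ^ (m + 3) = 2 * (z / 2) ^ (m + 3) := by
      rw [zpow_sub₀ two_ne_zero, zpow_one, zpow_natCast, div_pow]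
      field_simp
    push_cast at hrec' h2pow ⊢
    rw [hrec']
    linear_combination
      ((∑ k ∈ range (m + 3 + 1), ((m + 3).choose k : ℂ) * (l k : ℂ)) - (m + 3)) / (m + 3)! * h2pow

/-- The Poisson generating function `M(z) = e^{-z} L(z)` satisfies
`M'(z) + M(z) = 1 - z e^{-z/2} - e^{-z} + (z²/4) e^{-z} + 2 M(z/2)` for all `z ∈ ℂ`. -/
theorem dst_poisson_equation
    (l : ℕ → ℝ)
    (h0 : l 0 = 0) (h1 : l 1 = 0) (h2 : l 2 = 0) (h3 : l 3 = 1/2)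
    (hrec : ∀ n : ℕ, 3 ≤ n →
      l (n+1) = 1 + (2:ℝ) ^ (1 - (n:ℤ)) * ∑ k ∈ Finset.range (n+1), (n.choose k : ℝ) * l k
        - (n : ℝ) * (2:ℝ) ^ (1 - (n:ℤ)))
    (L : ℂ → ℂ)
    (hL : ∀ z : ℂ, HasSum (fun n : ℕ => (l n : ℂ) * z ^ n / (n.factorial : ℂ)) (L z)) :
    ∀ z : ℂ, HasDerivAt (fun w => Complex.exp (-w) * L w)
      (1 - z * Complex.exp (-z/2) - Complex.exp (-z) + z^2/4 * Complex.exp (-z)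
        + 2 * (Complex.exp (-(z/2)) * L (z/2)) - Complex.exp (-z) * L z) z := by
  intro z
  have hL' : HasSum (fun n => (l (n + 1) : ℂ) * z ^ n / n !)
      (Complex.exp z - 2 * (z / 2 * Complex.exp (z / 2)) + 2 * (L (z / 2) * Complex.exp (z / 2))
        - 1 + z ^ 2 / 4) :=
    ((((Complex.hasSum_pow_div_factorial z).sub
      ((Complex.hasSum_nat_mul_pow_div_factorial (z / 2)).mul_left 2)).add
      ((hasSum_egf_choose_mul_cexp hL (z / 2)).mul_left 2)).sub (hasSum_ite_eq 0 1)).add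
      (hasSum_ite_eq 2 (z ^ 2 / 4)) |>.congr_fun (egf_term_succ_eq l h0 h1 h2 h3 hrec z)
  have hLderiv := hasDerivAt_of_hasSum_egf hL z
  rw [hL'.tsum_eq] at hLderiv
  refine ((hasDerivAt_neg z).cexp.mul hLderiv).congr_deriv ?_
  have e1 : Complex.exp (-z) * Complex.exp z = 1 := by rw [← Complex.exp_add]; simp
  have e2 : Complex.exp (-z) * Complex.exp (z / 2) = Complex.exp (-(z / 2)) := by
    rw [← Complex.exp_add]; ring_nf
  rw [neg_div]
  linear_combination e1 + (2 * L (z / 2) - z) * e2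
end

section
/- For every integer N ≥ 1, one has m_{N+1}·(−1)^N / Q_{N-1} = ∑_{n=2}^{N} (n·2^{1-n} − 1 + n(n−1)/4)/Q_{n-1}. -/
open Finset

/-- `Q m = ∏_{k=1}^m (1 - 2^{-k})`, with `Q 0 = 1`. -/
noncomputable def Q (m : ℕ) : ℝ := ∏ k ∈ Finset.Icc 1 m, (1 - (2:ℝ) ^ (-(k:ℤ)))

/-!
Put `S_n = ∑_k C(n,k) (-1)^k l_k` (`alternatingBinomialSum l n`), so that `m_n = (-1)^n S_n`.
Pascal's rule gives `S_{n+1} = S_n - ∑_j C(n,j) (-1)^j l_{j+1}`. Substituting the recurrence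
for `l_{j+1}` (exact for `j ≥ 3`, with explicit defects at `j = 0, 1, 2`) leaves binomial sums
evaluated at `x = -1/2`, the key one being
`∑_j C(n,j) x^j ∑_k C(j,k) f_k = ∑_k C(n,k) x^k (1+x)^{n-k} f_k`, in which
`(-1/2)^k (1/2)^{n-k} = (-1)^k 2^{-n}`. The outcome is the first-order recurrence
`S_{n+1} = (1 - 2^{1-n}) S_n - c_n` with `c_n` the summand of the theorem. As
`Q_{n-1} = (1 - 2^{1-n}) Q_{n-2}`, the quotient `-S_{n+1} / Q_{n-1}` grows by `c_n / Q_{n-1}` at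
each step, starting from `S_2 = 0`.
-/

section Binomial

variable {R : Type*} [CommRing R]

theorem sum_range_choose_mul_pow (x : R) (n : ℕ) :
    ∑ j ∈ range (n + 1), (n.choose j : R) * x ^ j = (1 + x) ^ n := by
  rw [add_comm 1 x, add_pow]
  simp only [one_pow, mul_one, mul_comm]

theorem sum_range_natCast_mul_choose_mul_pow (x : R) (n : ℕ) :
    ∑ j ∈ range (n + 1), (j : R) * n.choose j * x ^ j = n * x * (1 + x) ^ (n - 1) := by
  cases n with
  | zero => simp
  | succ n =>
    rw [sum_range_succ', Nat.add_sub_cancel, ← sum_range_choose_mul_pow, mul_sum]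
    simp only [Nat.cast_zero, zero_mul, add_zero]
    refine sum_congr rfl fun j _ => ?_
    have h := congrArg (Nat.cast (R := R)) (Nat.add_one_mul_choose_eq n j)
    push_cast at h ⊢
    linear_combination (-x ^ (j + 1)) * h

theorem sum_Ico_choose_mul_choose_mul_pow (x : R) {n k : ℕ} (hk : k ≤ n) :
    ∑ j ∈ Ico k (n + 1), (n.choose j : R) * j.choose k * x ^ j
      = n.choose k * x ^ k * (1 + x) ^ (n - k) := by
  rw [sum_Ico_eq_sum_range, show n + 1 - k = n - k + 1 by omega,
    ← sum_range_choose_mul_pow, mul_sum]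
  refine sum_congr rfl fun i _ => ?_
  have h := congrArg (Nat.cast (R := R)) (Nat.choose_mul (n := n) (Nat.le_add_right k i))
  rw [Nat.add_sub_cancel_left] at h
  push_cast at h
  rw [pow_add]
  linear_combination (x ^ k * x ^ i) * h

theorem sum_range_choose_mul_pow_mul_sum_range_choose (x : R) (f : ℕ → R) (n : ℕ) :
    ∑ j ∈ range (n + 1),
        (n.choose j : R) * x ^ j * ∑ k ∈ range (j + 1), (j.choose k : R) * f k
      = ∑ k ∈ range (n + 1), (n.choose k : R) * x ^ k * (1 + x) ^ (n - k) * f k := by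
  simp only [mul_sum, range_eq_Ico]
  rw [← sum_Ico_Ico_comm]
  refine sum_congr rfl fun k hk => ?_
  rw [← sum_Ico_choose_mul_choose_mul_pow x (Nat.lt_succ_iff.mp (mem_Ico.mp hk).2), sum_mul]
  exact sum_congr rfl fun j _ => by ring

theorem neg_one_pow_sub_of_le {n k : ℕ} (hk : k ≤ n) :
    (-1 : R) ^ (n - k) = (-1) ^ n * (-1) ^ k := by
  rw [← Nat.sub_add_cancel hk, Nat.add_sub_cancel, pow_add, mul_assoc, ← pow_add, ← two_mul,
    pow_mul, neg_one_sq, one_pow, mul_one]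

def alternatingBinomialSum (f : ℕ → R) (n : ℕ) : R :=
  ∑ k ∈ range (n + 1), (n.choose k : R) * (-1) ^ k * f k

namespace alternatingBinomialSum

theorem add (f g : ℕ → R) (n : ℕ) :
    alternatingBinomialSum (f + g) n = alternatingBinomialSum f n + alternatingBinomialSum g n := by
  simp only [alternatingBinomialSum, Pi.add_apply, mul_add, sum_add_distrib]

theorem sub (f g : ℕ → R) (n : ℕ) :
    alternatingBinomialSum (f - g) n = alternatingBinomialSum f n - alternatingBinomialSum g n := by
  simp only [alternatingBinomialSum, Pi.sub_apply, mul_sub, sum_sub_distrib]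

theorem neg_one_pow_mul (f : ℕ → R) (n : ℕ) :
    (-1) ^ n * alternatingBinomialSum f n
      = ∑ k ∈ range (n + 1), (n.choose k : R) * (-1) ^ (n - k) * f k := by
  rw [alternatingBinomialSum, mul_sum]
  refine sum_congr rfl fun k hk => ?_
  rw [neg_one_pow_sub_of_le (Nat.lt_succ_iff.mp (mem_range.mp hk))]
  ring

theorem succ (f : ℕ → R) (n : ℕ) :
    alternatingBinomialSum f (n + 1)
      = alternatingBinomialSum f n - alternatingBinomialSum (fun k => f (k + 1)) n := by
  have pascal : ∀ i ∈ range (n + 1), ((n + 1).choose (i + 1) : R) * (-1) ^ (i + 1) * f (i + 1)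
      = n.choose (i + 1) * (-1) ^ (i + 1) * f (i + 1) - n.choose i * (-1) ^ i * f (i + 1) := by
    intro i _
    rw [Nat.choose_succ_succ]
    push_cast
    ring
  have shift : ∑ i ∈ range (n + 1), (n.choose (i + 1) : R) * (-1) ^ (i + 1) * f (i + 1)
      = alternatingBinomialSum f n - f 0 := by
    rw [sum_range_succ, Nat.choose_succ_self, alternatingBinomialSum, sum_range_succ']
    simp
  rw [alternatingBinomialSum, sum_range_succ', sum_congr rfl pascal, sum_sub_distrib, shift]
  simp only [alternatingBinomialSum, Nat.choose_zero_right, Nat.cast_one, pow_zero, mul_one,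
    one_mul]
  ring

theorem const_one {n : ℕ} (hn : n ≠ 0) : alternatingBinomialSum (fun _ => (1 : R)) n = 0 := by
  simp only [alternatingBinomialSum, mul_one]
  rw [sum_range_choose_mul_pow, add_neg_cancel, zero_pow hn]

theorem eq_of_forall_three_le_eq_zero {e : ℕ → R} (he : ∀ j, 3 ≤ j → e j = 0) {n : ℕ}
    (hn : 2 ≤ n) : alternatingBinomialSum e n = e 0 - n * e 1 + n.choose 2 * e 2 := by
  rw [alternatingBinomialSum, ← sum_subset (range_subset_range.mpr (by omega : 3 ≤ n + 1))]
  · simp only [sum_range_succ, range_zero, sum_empty, Nat.choose_zero_right, Nat.choose_one_right]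
    ring
  · intro j _ hj
    rw [he j (by simpa using hj), mul_zero]

end alternatingBinomialSum

end Binomial

theorem two_zpow_one_sub (n : ℕ) : (2 : ℝ) ^ (1 - (n : ℤ)) = 2 * 2⁻¹ ^ n := by
  rw [zpow_sub₀ two_ne_zero, zpow_one, zpow_natCast, div_eq_mul_inv, inv_pow]

namespace alternatingBinomialSum

theorem natCast_mul_two_zpow (n : ℕ) :
    alternatingBinomialSum (fun j => (j : ℝ) * 2 ^ (1 - (j : ℤ))) n
      = -(n * 2 ^ (1 - (n : ℤ))) := by
  have h := sum_range_natCast_mul_choose_mul_pow (-2⁻¹ : ℝ) n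
  rw [show (1 : ℝ) + -2⁻¹ = 2⁻¹ by norm_num] at h
  calc alternatingBinomialSum (fun j => (j : ℝ) * 2 ^ (1 - (j : ℤ))) n
      = 2 * ∑ j ∈ range (n + 1), (j : ℝ) * n.choose j * (-2⁻¹) ^ j := by
        simp only [alternatingBinomialSum, two_zpow_one_sub, mul_sum, neg_pow (2⁻¹ : ℝ)]
        exact sum_congr rfl fun j _ => by ring
    _ = -(n * 2 ^ (1 - (n : ℤ))) := by
        rw [h, two_zpow_one_sub]
        cases n with
        | zero => simp
        | succ n => rw [Nat.add_sub_cancel, pow_succ]; push_cast; ring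

theorem two_zpow_mul_sum_range_choose (f : ℕ → ℝ) (n : ℕ) :
    alternatingBinomialSum
        (fun j => 2 ^ (1 - (j : ℤ)) * ∑ k ∈ range (j + 1), (j.choose k : ℝ) * f k) n
      = 2 ^ (1 - (n : ℤ)) * alternatingBinomialSum f n := by
  have h := sum_range_choose_mul_pow_mul_sum_range_choose (-2⁻¹ : ℝ) f n
  rw [show (1 : ℝ) + -2⁻¹ = 2⁻¹ by norm_num] at h
  calc alternatingBinomialSum
        (fun j => 2 ^ (1 - (j : ℤ)) * ∑ k ∈ range (j + 1), (j.choose k : ℝ) * f k) n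
      = 2 * ∑ j ∈ range (n + 1), (n.choose j : ℝ) * (-2⁻¹) ^ j *
          ∑ k ∈ range (j + 1), (j.choose k : ℝ) * f k := by
        simp only [alternatingBinomialSum, two_zpow_one_sub, mul_sum, neg_pow (2⁻¹ : ℝ)]
        exact sum_congr rfl fun j _ => sum_congr rfl fun k _ => by ring
    _ = 2 ^ (1 - (n : ℤ)) * alternatingBinomialSum f n := by
        rw [h, two_zpow_one_sub, alternatingBinomialSum, mul_sum, mul_sum]
        refine sum_congr rfl fun k hk => ?_
        have hkn : 2⁻¹ ^ k * 2⁻¹ ^ (n - k) = (2⁻¹ : ℝ) ^ n := by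
          rw [← pow_add, Nat.add_sub_cancel' (Nat.lt_succ_iff.mp (mem_range.mp hk))]
        rw [neg_pow]
        linear_combination (2 * n.choose k * (-1) ^ k * f k) * hkn

end alternatingBinomialSum

theorem alternatingBinomialSum_shift_of_rec (l : ℕ → ℝ)
    (h0 : l 0 = 0) (h1 : l 1 = 0) (h2 : l 2 = 0) (h3 : l 3 = 1 / 2)
    (hrec : ∀ n : ℕ, 3 ≤ n →
      l (n + 1) = 1 + (2 : ℝ) ^ (1 - (n : ℤ)) * ∑ k ∈ range (n + 1), (n.choose k : ℝ) * l k
        - (n : ℝ) * (2 : ℝ) ^ (1 - (n : ℤ)))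
    {n : ℕ} (hn : 2 ≤ n) :
    alternatingBinomialSum (fun k => l (k + 1)) n
      = 2 ^ (1 - (n : ℤ)) * alternatingBinomialSum l n
        + ((n : ℝ) * 2 ^ (1 - (n : ℤ)) - 1 + n * (n - 1) / 4) := by
  set B : ℕ → ℝ := fun j =>
    2 ^ (1 - (j : ℤ)) * ∑ k ∈ range (j + 1), (j.choose k : ℝ) * l k
  set D : ℕ → ℝ := fun j => (j : ℝ) * 2 ^ (1 - (j : ℤ))
  set e : ℕ → ℝ := fun j => l (j + 1) - (1 + B j - D j)
  have he : ∀ j, 3 ≤ j → e j = 0 := fun j hj => by simp only [e, B, D, hrec j hj, sub_self]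
  have hsplit : (fun k => l (k + 1)) = e + (fun _ => 1) - D + B := by
    funext j
    simp only [e, Pi.add_apply, Pi.sub_apply]
    ring
  have he0 : e 0 = -1 := by simp [e, B, D, h0, h1]
  have he1 : e 1 = 0 := by simp [e, B, D, h0, h1, h2, sum_range_succ]
  have he2 : e 2 = 1 / 2 := by norm_num [e, B, D, h0, h1, h2, h3, sum_range_succ]
  rw [hsplit, alternatingBinomialSum.add, alternatingBinomialSum.sub, alternatingBinomialSum.add,
    alternatingBinomialSum.eq_of_forall_three_le_eq_zero he hn,
    alternatingBinomialSum.const_one (by omega), alternatingBinomialSum.natCast_mul_two_zpow,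
    alternatingBinomialSum.two_zpow_mul_sum_range_choose, he0, he1, he2, Nat.cast_choose_two]
  ring

theorem Q_pos (n : ℕ) : 0 < Q n :=
  prod_pos fun k hk => sub_pos.mpr <| zpow_lt_one_of_neg₀ one_lt_two <| by
    have := (mem_Icc.mp hk).1
    omega

theorem Q_succ (n : ℕ) : Q (n + 1) = Q n * (1 - 2 ^ (-((n + 1 : ℕ) : ℤ))) :=
  prod_Icc_succ_top (by omega) _

theorem div_eq_add_sum_Ioc_of_linear_rec {K : Type*} [Field K] {a c r P : ℕ → K} {s : ℕ}
    (hP : ∀ n, P n ≠ 0) (hPr : ∀ n, s ≤ n → P (n + 1) = P n * r (n + 1))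
    (ha : ∀ n, s ≤ n → a (n + 1) = r (n + 1) * a n + c (n + 1)) :
    ∀ N, s ≤ N → a N / P N = a s / P s + ∑ n ∈ Ioc s N, c n / P n := by
  intro N hN
  induction N, hN using Nat.le_induction with
  | base => simp
  | succ N hN ih =>
    have hr : r (N + 1) ≠ 0 := right_ne_zero_of_mul (hPr N hN ▸ hP (N + 1))
    rw [sum_Ioc_succ_top (by omega), ← add_assoc, ← ih, ha N hN, hPr N hN]
    field_simp [hP N]

/-- For every `N ≥ 1`, `m_{N+1} (-1)^N / Q_{N-1} = ∑_{n=2}^N (n 2^{1-n} - 1 + n(n-1)/4)/Q_{n-1}`. -/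
theorem dst_poisson_coeff_summed
    (l : ℕ → ℝ)
    (h0 : l 0 = 0) (h1 : l 1 = 0) (h2 : l 2 = 0) (h3 : l 3 = 1/2)
    (hrec : ∀ n : ℕ, 3 ≤ n →
      l (n+1) = 1 + (2:ℝ) ^ (1 - (n:ℤ)) * ∑ k ∈ Finset.range (n+1), (n.choose k : ℝ) * l k
        - (n : ℝ) * (2:ℝ) ^ (1 - (n:ℤ)))
    (m : ℕ → ℝ)
    (hm : ∀ n : ℕ, m n = ∑ k ∈ Finset.range (n+1), (n.choose k : ℝ) * (-1)^(n-k) * l k) :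
    ∀ N : ℕ, 1 ≤ N →
      m (N+1) * (-1)^N / Q (N-1)
        = ∑ n ∈ Finset.Icc 2 N,
            ((n:ℝ) * (2:ℝ) ^ (1 - (n:ℤ)) - 1 + (n:ℝ) * ((n:ℝ) - 1) / 4) / Q (n-1) := by
  intro N hN
  have hmS : m (N + 1) * (-1) ^ N = -alternatingBinomialSum l (N + 1) := by
    have hsq : ((-1 : ℝ) ^ N) ^ 2 = 1 := by rw [← pow_mul, pow_mul', neg_one_sq, one_pow]
    rw [hm, ← alternatingBinomialSum.neg_one_pow_mul]
    linear_combination (-alternatingBinomialSum l (N + 1)) * hsq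
  have hS2 : alternatingBinomialSum l 2 = 0 := by
    simp [alternatingBinomialSum, sum_range_succ, h0, h1, h2]
  have hQ (n : ℕ) (hn : 1 ≤ n) :
      Q (n + 1 - 1) = Q (n - 1) * (1 - 2 ^ (1 - ((n + 1 : ℕ) : ℤ))) := by
    obtain ⟨k, rfl⟩ := Nat.exists_eq_add_of_le' hn
    rw [show (1 : ℤ) - ((k + 1 + 1 : ℕ) : ℤ) = -((k + 1 : ℕ) : ℤ) by push_cast; ring]
    exact Q_succ k
  have hstep (n : ℕ) (hn : 1 ≤ n) : -alternatingBinomialSum l (n + 1 + 1)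
      = (1 - 2 ^ (1 - ((n + 1 : ℕ) : ℤ))) * -alternatingBinomialSum l (n + 1)
        + (((n + 1 : ℕ) : ℝ) * 2 ^ (1 - ((n + 1 : ℕ) : ℤ)) - 1
          + ((n + 1 : ℕ) : ℝ) * (((n + 1 : ℕ) : ℝ) - 1) / 4) := by
    rw [alternatingBinomialSum.succ,
      alternatingBinomialSum_shift_of_rec l h0 h1 h2 h3 hrec (by omega : 2 ≤ n + 1)]
    ring
  rw [hmS, show Icc 2 N = Ioc 1 N from Icc_add_one_left_eq_Ioc 1 N,
    div_eq_add_sum_Ioc_of_linear_rec (a := fun n => -alternatingBinomialSum l (n + 1))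
      (r := fun n => 1 - 2 ^ (1 - (n : ℤ))) (P := fun n => Q (n - 1))
      (c := fun n => (n : ℝ) * 2 ^ (1 - (n : ℤ)) - 1 + n * (n - 1) / 4)
      (fun n => (Q_pos _).ne') hQ hstep N hN]
  simp [hS2]
end
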